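/- For any two distinct positive integers r and s, there exists exactly one sequence taking values in {r, s} that begins with r and equals the sequence of its own run lengths (a run being a maximal block of consecutive equal symbols). This sequence is the generalised Kolakoski sequence K(r,s). -/

import Mathlib

/-- Sum of the first `m` letters of `A` (indices `0, …, m-1`), i.e. `A₁ + ⋯ + A_m`
in 1-indexed notation. -/
def psum (A : ℕ → ℕ) (m : ℕ) : ℕ := ∑ i ∈ Finset.range m, A i

/-- `A` equals the sequence of its own run lengths: the `m`-th run of `A` occupies
exactly the positions in `[psum A m, psum A (m+1))` (hence has length `A m`);
`A` is constant on each such block, and consecutive blocks carry different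
symbols (which is exactly maximality of the runs). -/
def IsRunSelf (A : ℕ → ℕ) : Prop :=
  ∀ m : ℕ,
    (∀ i : ℕ, psum A m ≤ i → i < psum A (m + 1) → A i = A (psum A m)) ∧
    A (psum A m) ≠ A (psum A (m + 1))

/-- The generalised Kolakoski sequence `K(r,s)`, 0-indexed: it takes values in
`{r, s}`, starts with `r`, and equals the sequence of its own run lengths. -/
def IsGenKolakoski (r s : ℕ) (A : ℕ → ℕ) : Prop :=
  (∀ n, A n = r ∨ A n = s) ∧ A 0 = r ∧ IsRunSelf A

/-!
Whether position `i` lies in an even- or odd-numbered run is determined by the partial sums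
of `A 0, …, A (i - 1)`, so a sequence over `{r, s}` starting with `r` is its own run-length
sequence exactly when `A i` is `r` or `s` according to the parity of the run containing `i`.
This is a fixed-point equation `F A = A` in which `F A i` only looks at `A` below `i`; such an
equation has exactly one solution, built by strong recursion.
-/

theorem existsUnique_fixedPoint_of_causal {α : Type*} [Nonempty α] (F : (ℕ → α) → ℕ → α)
    (hF : ∀ A B i, (∀ k < i, A k = B k) → F A i = F B i) : ∃! A, F A = A := by
  let A : ℕ → α := Nat.strongRec fun i rec =>
    F (fun k => if h : k < i then rec k h else Classical.arbitrary α) i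
  have hA : F A = A := funext fun i => by
    rw [show A i = _ from Nat.strongRec_eq _ i]
    exact hF _ _ i fun k hk => by rw [dif_pos hk]
  refine ⟨A, hA, fun B hB => funext fun i => ?_⟩
  induction i using Nat.strong_induction_on with
  | _ i ih => rw [← hB, ← hA]; exact hF B A i ih

theorem Nat.findGreatest_congr {P Q : ℕ → Prop} [DecidablePred P] [DecidablePred Q] {n : ℕ}
    (h : ∀ m ≤ n, (P m ↔ Q m)) : Nat.findGreatest P n = Nat.findGreatest Q n := by
  induction n with
  | zero => rfl
  | succ n ih =>
    rw [Nat.findGreatest_succ, Nat.findGreatest_succ, ih fun m hm => h m (by omega),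
      if_congr (h (n + 1) le_rfl) rfl rfl]

theorem psum_succ (A : ℕ → ℕ) (m : ℕ) : psum A (m + 1) = psum A m + A m :=
  Finset.sum_range_succ A m

theorem psum_strictMono {A : ℕ → ℕ} (hA : ∀ n, 0 < A n) : StrictMono (psum A) :=
  strictMono_nat_of_lt_succ fun m => by rw [psum_succ]; exact Nat.lt_add_of_pos_right (hA m)

/-- The bound `m ≤ i` loses nothing for positive `A` (then `m ≤ psum A m`), and it makes
`runIndex A i` depend only on `A 0, …, A (i - 1)`. -/
def runIndex (A : ℕ → ℕ) (i : ℕ) : ℕ := Nat.findGreatest (fun m => psum A m ≤ i) i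

theorem runIndex_congr {A B : ℕ → ℕ} {i : ℕ} (h : ∀ k < i, A k = B k) :
    runIndex A i = runIndex B i :=
  Nat.findGreatest_congr fun m hm => by
    rw [psum, psum, Finset.sum_congr rfl fun k hk => h k (by simp at hk; omega)]

theorem runIndex_eq {A : ℕ → ℕ} (hA : ∀ n, 0 < A n) {m i : ℕ} (h₁ : psum A m ≤ i)
    (h₂ : i < psum A (m + 1)) : runIndex A i = m := by
  refine Nat.findGreatest_eq_iff.2 ⟨((psum_strictMono hA).id_le m).trans h₁, fun _ => h₁, ?_⟩
  intro n hmn _ hn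
  have : psum A (m + 1) ≤ psum A n := (psum_strictMono hA).monotone hmn
  omega

theorem psum_runIndex_le (A : ℕ → ℕ) (i : ℕ) : psum A (runIndex A i) ≤ i :=
  Nat.findGreatest_spec (P := fun m => psum A m ≤ i) (Nat.zero_le i) (by simp [psum])

theorem lt_psum_runIndex_succ {A : ℕ → ℕ} (hA : ∀ n, 0 < A n) (i : ℕ) :
    i < psum A (runIndex A i + 1) := by
  rcases (Nat.findGreatest_le i : runIndex A i ≤ i).lt_or_eq with hlt | heq
  · exact not_le.1 <| Nat.findGreatest_is_greatest (P := fun m => psum A m ≤ i)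
      (Nat.lt_succ_self _) hlt
  · rw [runIndex, heq]; exact (psum_strictMono hA).id_le (i + 1)

def kolakoskiStep (r s : ℕ) (A : ℕ → ℕ) (i : ℕ) : ℕ := if Even (runIndex A i) then r else s

theorem kolakoskiStep_congr (r s : ℕ) {A B : ℕ → ℕ} {i : ℕ} (h : ∀ k < i, A k = B k) :
    kolakoskiStep r s A i = kolakoskiStep r s B i := by
  rw [kolakoskiStep, kolakoskiStep, runIndex_congr h]

theorem IsGenKolakoski.apply_psum {r s : ℕ} {A : ℕ → ℕ} (hA : IsGenKolakoski r s A) (m : ℕ) :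
    A (psum A m) = if Even m then r else s := by
  obtain ⟨hmem, h0, hrun⟩ := hA
  induction m with
  | zero => simpa [psum] using h0
  | succ m ih =>
    have hne := (hrun m).2
    rcases Nat.even_or_odd m with hm | hm <;>
      rcases hmem (psum A (m + 1)) with h | h <;>
      simp_all [Nat.even_add_one, Nat.not_even_iff_odd]

theorem IsGenKolakoski.kolakoskiStep_eq {r s : ℕ} (hr : 0 < r) (hs : 0 < s) {A : ℕ → ℕ}
    (hA : IsGenKolakoski r s A) : kolakoskiStep r s A = A := by
  have hpos : ∀ n, 0 < A n := fun n => (hA.1 n).elim (· ▸ hr) (· ▸ hs)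
  funext i
  rw [kolakoskiStep, (hA.2.2 _).1 i (psum_runIndex_le A i) (lt_psum_runIndex_succ hpos i),
    hA.apply_psum]

theorem isGenKolakoski_of_kolakoskiStep_eq {r s : ℕ} (hr : 0 < r) (hs : 0 < s) (hrs : r ≠ s)
    {A : ℕ → ℕ} (hA : kolakoskiStep r s A = A) : IsGenKolakoski r s A := by
  have hval : ∀ i, A i = if Even (runIndex A i) then r else s := fun i => (congrFun hA i).symm
  have hpos : ∀ n, 0 < A n := fun n => by rw [hval]; split <;> assumption
  have hrun : ∀ m i, psum A m ≤ i → i < psum A (m + 1) → A i = if Even m then r else s :=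
    fun m i h₁ h₂ => by rw [hval, runIndex_eq hpos h₁ h₂]
  have hstart : ∀ m, A (psum A m) = if Even m then r else s :=
    fun m => hrun m _ le_rfl (psum_strictMono hpos (Nat.lt_succ_self m))
  refine ⟨fun n => by rw [hval]; split <;> simp, by simpa [psum] using hstart 0, fun m => ⟨?_, ?_⟩⟩
  · intro i h₁ h₂
    rw [hrun m i h₁ h₂, hstart]
  · rw [hstart, hstart]
    rcases Nat.even_or_odd m with hm | hm <;> simp [Nat.even_add_one, hm, hrs, hrs.symm]

theorem isGenKolakoski_iff {r s : ℕ} (hr : 0 < r) (hs : 0 < s) (hrs : r ≠ s) {A : ℕ → ℕ} :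
    IsGenKolakoski r s A ↔ kolakoskiStep r s A = A :=
  ⟨(·.kolakoskiStep_eq hr hs), isGenKolakoski_of_kolakoskiStep_eq hr hs hrs⟩

/-- For any two distinct positive integers `r` and `s`, there
is exactly one sequence over `{r, s}` beginning with `r` that equals the
sequence of its own run lengths. -/
theorem genKolakoski_exists_unique (r s : ℕ) (hr : 0 < r) (hs : 0 < s)
    (hrs : r ≠ s) : ∃! A : ℕ → ℕ, IsGenKolakoski r s A := by
  simpa only [isGenKolakoski_iff hr hs hrs] using
    existsUnique_fixedPoint_of_causal (kolakoskiStep r s) fun _ _ _ => kolakoskiStep_congr r s
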